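/- Let n ≥ 2 and define w(x₁,…,xₙ) = 1/(1+|xₙ|)². Then w satisfies the dyadic reverse doubling condition on ℝⁿ with constant d = 2^{n−1}: for any dyadic rectangles I ⊂ J with sides parallel to the axes such that I is obtained from J by halving every side (so |I| = 2^{−n}|J|), one has 2^{n−1} ∫_I w dx ≤ ∫_J w dx. -/

import Mathlib

/-!
The weight depends on the last coordinate only, so by Fubini its integral over a box is the
product of the other side lengths times a one-dimensional integral over the last side.
Passing from `I` to `J` doubles each of the other `n - 1` side lengths, while the last side of `J`
contains that of `I` and the one-dimensional integrand is nonnegative.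
-/

open MeasureTheory Set

noncomputable section

section PiMeasure

variable {ι : Type*} [Fintype ι] [DecidableEq ι] {X : ι → Type*} [∀ i, MeasurableSpace (X i)]
  {E : Type*} [NormedAddCommGroup E] [NormedSpace ℝ E]

theorem integral_comp_eval_eq_prod_smul (μ : ∀ i, Measure (X i)) [∀ i, IsFiniteMeasure (μ i)]
    {i : ι} {f : X i → E} (hf : AEStronglyMeasurable f (μ i)) :
    ∫ x, f (x i) ∂Measure.pi μ = (∏ j ∈ Finset.univ.erase i, (μ j).real univ) • ∫ t, f t ∂μ i := by
  rw [← integral_map (measurable_pi_apply i).aemeasurable, Measure.pi_map_eval,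
    integral_smul_measure, ENNReal.toReal_prod]
  · rfl
  · rw [Measure.pi_map_eval]
    exact hf.smul_measure _

theorem setIntegral_univ_pi_comp_eval (μ : ∀ i, Measure (X i)) [∀ i, SigmaFinite (μ i)]
    {s : ∀ i, Set (X i)} (hs : ∀ j, μ j (s j) ≠ ⊤) {i : ι} {f : X i → E}
    (hf : AEStronglyMeasurable f ((μ i).restrict (s i))) :
    ∫ x in univ.pi s, f (x i) ∂Measure.pi μ =
      (∏ j ∈ Finset.univ.erase i, (μ j).real (s j)) • ∫ t in s i, f t ∂μ i := by
  have := fun j => isFiniteMeasure_restrict.2 (hs j)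
  rw [Measure.restrict_pi_pi, integral_comp_eval_eq_prod_smul _ hf]
  simp only [measureReal_restrict_apply_univ]

end PiMeasure

def dyadicIco (k a : ℤ) : Set ℝ := Ico (a * 2 ^ k) ((a + 1) * 2 ^ k)

theorem volume_real_dyadicIco (k a : ℤ) : volume.real (dyadicIco k a) = 2 ^ k := by
  rw [dyadicIco, Real.volume_real_Ico_of_le (by gcongr; linarith)]
  ring

theorem dyadicIco_nonempty (k a : ℤ) : (dyadicIco k a).Nonempty :=
  nonempty_Ico.2 (by gcongr; linarith)

section DyadicBox

variable {ι : Type*}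

def dyadicBox (k a : ι → ℤ) : Set (ι → ℝ) := univ.pi fun i => dyadicIco (k i) (a i)

theorem dyadicIco_subset_of_dyadicBox_subset {k a k' a' : ι → ℤ}
    (h : dyadicBox k a ⊆ dyadicBox k' a') (i : ι) :
    dyadicIco (k i) (a i) ⊆ dyadicIco (k' i) (a' i) :=
  (univ_pi_subset_univ_pi_iff.1 h).resolve_right
    (fun ⟨_, hj⟩ => (dyadicIco_nonempty _ _).ne_empty hj) i

variable [Fintype ι] [DecidableEq ι]

theorem setIntegral_dyadicBox_comp_eval (k a : ι → ℤ) {i : ι} {f : ℝ → ℝ}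
    (hf : AEStronglyMeasurable f (volume.restrict (dyadicIco (k i) (a i)))) :
    ∫ x in dyadicBox k a, f (x i) =
      (∏ j ∈ Finset.univ.erase i, (2 : ℝ) ^ k j) * ∫ t in dyadicIco (k i) (a i), f t := by
  rw [volume_pi, dyadicBox, setIntegral_univ_pi_comp_eval _ (s := fun j => dyadicIco (k j) (a j))
    (fun _ => measure_Ico_lt_top.ne) hf]
  simp only [volume_real_dyadicIco, smul_eq_mul]

theorem prod_erase_two_zpow_add_one (k : ι → ℤ) (i : ι) :
    ∏ j ∈ Finset.univ.erase i, (2 : ℝ) ^ (k j + 1) =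
      2 ^ (Fintype.card ι - 1) * ∏ j ∈ Finset.univ.erase i, (2 : ℝ) ^ k j := by
  simp only [zpow_add_one₀ (two_ne_zero' ℝ), Finset.prod_mul_distrib, Finset.prod_const,
    Finset.card_erase_of_mem (Finset.mem_univ i), Finset.card_univ]
  ring

end DyadicBox

theorem stmt6 (n : ℕ) (hn : 2 ≤ n)
    (w : (Fin n → ℝ) → ℝ)
    (hw : w = fun x => (1 + |x ⟨n - 1, by omega⟩|) ^ (-2 : ℤ))
    (k : Fin n → ℤ) (a b : Fin n → ℤ)
    (I J : Set (Fin n → ℝ))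
    (hI : I = Set.univ.pi fun i =>
      Set.Ico ((a i : ℝ) * 2 ^ (k i)) (((a i : ℝ) + 1) * 2 ^ (k i)))
    (hJ : J = Set.univ.pi fun i =>
      Set.Ico ((b i : ℝ) * 2 ^ (k i + 1)) (((b i : ℝ) + 1) * 2 ^ (k i + 1)))
    (hIJ : I ⊆ J) :
    2 ^ (n - 1) * ∫ x in I, w x ≤ ∫ x in J, w x := by
  change I = dyadicBox k a at hI
  change J = dyadicBox (fun i => k i + 1) b at hJ
  subst hw hI hJ
  set m : Fin n := ⟨n - 1, by omega⟩
  set f : ℝ → ℝ := fun t => (1 + |t|) ^ (-2 : ℤ)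
  have hf : Continuous f :=
    (by fun_prop : Continuous fun t : ℝ => 1 + |t|).zpow₀ _ fun t => .inl (by positivity)
  have hmono : ∫ t in dyadicIco (k m) (a m), f t ≤ ∫ t in dyadicIco (k m + 1) (b m), f t :=
    setIntegral_mono_set (hf.integrableOn_Icc.mono_set Ico_subset_Icc_self)
      (.of_forall fun t => by positivity) (dyadicIco_subset_of_dyadicBox_subset hIJ m).eventuallyLE
  rw [setIntegral_dyadicBox_comp_eval _ _ hf.aestronglyMeasurable,
    setIntegral_dyadicBox_comp_eval _ _ hf.aestronglyMeasurable, prod_erase_two_zpow_add_one,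
    Fintype.card_fin, ← mul_assoc]
  gcongr
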